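/- Let q be a prime power and let a, b be positive integers with gcd(a,b) = 1. The vanishing ideal I of the F_q-rational points of the weighted projective plane P(1,a,b), i.e., the ideal of S = F_q[x₁,x₂,x₃] generated by all weighted-homogeneous polynomials (with respect to the grading deg x₁ = 1, deg x₂ = a, deg x₃ = b) that vanish at every point of F_q³ ∖ {(0,0,0)}, is equal to the ideal generated by the three polynomials f₁ = x₂^{(q−1)b+1}x₃ − x₂x₃^{(q−1)a+1}, f₂ = x₁^{(q−1)b+1}x₃ − x₁x₃^q, and f₃ = x₁^{(q−1)a+1}x₂ − x₁x₂^q. -/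
import Mathlib

open MvPolynomial

namespace WPV

variable (F : Type) [Field F]

noncomputable def mon (i j k : ℕ) : MvPolynomial (Fin 3) F := X 0 ^ i * X 1 ^ j * X 2 ^ k

def gens (a b c : ℕ) : Set (MvPolynomial (Fin 3) F) :=
  {X 1 ^ (c*b+1) * X 2 - X 1 * X 2 ^ (c*a+1),
   X 0 ^ (c*b+1) * X 2 - X 0 * X 2 ^ (c+1),
   X 0 ^ (c*a+1) * X 1 - X 0 * X 1 ^ (c+1)}

lemma mon_congr {i j k i' j' k' : ℕ} (h1 : i = i') (h2 : j = j') (h3 : k = k') :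
    mon F i j k = mon F i' j' k' := by subst h1 h2 h3; rfl

lemma step1 (a b c α β γ t : ℕ) :
    mon F α (β+1+b*c*t) (γ+1) - mon F α (β+1) (γ+1+a*c*t) ∈ Ideal.span (gens F a b c) := by
  obtain ⟨S, hS⟩ := sub_dvd_pow_sub_pow (X 1 ^ (b*c) : MvPolynomial (Fin 3) F) (X 2 ^ (a*c)) t
  have h : mon F α (β+1+b*c*t) (γ+1) - mon F α (β+1) (γ+1+a*c*t)
      = (X 0 ^ α * X 1 ^ β * X 2 ^ γ * S) * (X 1 ^ (c*b+1) * X 2 - X 1 * X 2 ^ (c*a+1)) := by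
    unfold mon; linear_combination (X 0 ^ α * X 1 ^ (β+1) * X 2 ^ (γ+1) : MvPolynomial (Fin 3) F) * hS
  rw [h]
  exact Ideal.mul_mem_left _ _ (Ideal.subset_span (by simp [gens]))

lemma step2 (a b c α β γ t : ℕ) :
    mon F (α+1+b*c*t) β (γ+1) - mon F (α+1) β (γ+1+c*t) ∈ Ideal.span (gens F a b c) := by
  obtain ⟨S, hS⟩ := sub_dvd_pow_sub_pow (X 0 ^ (b*c) : MvPolynomial (Fin 3) F) (X 2 ^ c) t
  have h : mon F (α+1+b*c*t) β (γ+1) - mon F (α+1) β (γ+1+c*t)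
      = (X 0 ^ α * X 1 ^ β * X 2 ^ γ * S) * (X 0 ^ (c*b+1) * X 2 - X 0 * X 2 ^ (c+1)) := by
    unfold mon; linear_combination (X 0 ^ (α+1) * X 1 ^ β * X 2 ^ (γ+1) : MvPolynomial (Fin 3) F) * hS
  rw [h]
  exact Ideal.mul_mem_left _ _ (Ideal.subset_span (by simp [gens]))

lemma step3 (a b c α β γ t : ℕ) :
    mon F (α+1+a*c*t) (β+1) γ - mon F (α+1) (β+1+c*t) γ ∈ Ideal.span (gens F a b c) := by
  obtain ⟨S, hS⟩ := sub_dvd_pow_sub_pow (X 0 ^ (a*c) : MvPolynomial (Fin 3) F) (X 1 ^ c) t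
  have h : mon F (α+1+a*c*t) (β+1) γ - mon F (α+1) (β+1+c*t) γ
      = (X 0 ^ α * X 1 ^ β * X 2 ^ γ * S) * (X 0 ^ (c*a+1) * X 1 - X 0 * X 1 ^ (c+1)) := by
    unfold mon; linear_combination (X 0 ^ (α+1) * X 1 ^ (β+1) * X 2 ^ γ : MvPolynomial (Fin 3) F) * hS
  rw [h]
  exact Ideal.mul_mem_left _ _ (Ideal.subset_span (by simp [gens]))


lemma canon_eq {a b N₀ N₁ N₂ D : ℕ} (ha : 0 < a) (hb : 0 < b)
    (hs : N₀ + a*N₁ < b) (h0 : N₀ < a) (hD : N₀ + a*N₁ + b*N₂ = D) :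
    D % b % a = N₀ ∧ D % b / a = N₁ ∧ D / b = N₂ := by
  subst hD
  have e1 : (N₀ + a*N₁ + b*N₂) % b = N₀ + a*N₁ := by
    rw [Nat.add_mul_mod_self_left, Nat.mod_eq_of_lt hs]
  have e2 : (N₀ + a*N₁ + b*N₂) / b = N₂ := by
    rw [Nat.add_mul_div_left _ _ hb, Nat.div_eq_of_lt hs, zero_add]
  refine ⟨?_, ?_, e2⟩ <;> rw [e1]
  · rw [Nat.add_mul_mod_self_left, Nat.mod_eq_of_lt h0]
  · rw [Nat.add_mul_div_left _ _ ha, Nat.div_eq_of_lt h0, zero_add]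

lemma reach (a b c : ℕ) (ha : 0 < a) (hb : 0 < b)
    (ρ₀ ρ₁ ρ₂ : ℕ) (h0 : 0 < ρ₀) (h1 : 0 < ρ₁) (h2 : 0 < ρ₂) (D : ℕ) :
    ∀ k N₀ N₁ N₂, (N₀ + a*N₁)*(D+1) + (if b ≤ N₀ + a*N₁ then N₁ else N₀) ≤ k →
      N₀ + a*N₁ + b*N₂ = D →
      mon F (ρ₀+c*N₀) (ρ₁+c*N₁) (ρ₂+c*N₂)
        - mon F (ρ₀+c*(D%b%a)) (ρ₁+c*(D%b/a)) (ρ₂+c*(D/b)) ∈ Ideal.span (gens F a b c) := by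
  obtain ⟨r₀, rfl⟩ : ∃ r, ρ₀ = r + 1 := ⟨ρ₀-1, by omega⟩
  obtain ⟨r₁, rfl⟩ : ∃ r, ρ₁ = r + 1 := ⟨ρ₁-1, by omega⟩
  obtain ⟨r₂, rfl⟩ : ∃ r, ρ₂ = r + 1 := ⟨ρ₂-1, by omega⟩
  intro k
  induction k with
  | zero =>
    intro N₀ N₁ N₂ hμ hD
    have hz : (N₀ + a*N₁)*(D+1) = 0 := by omega
    have hz2 : N₀ + a*N₁ = 0 := by
      rcases Nat.mul_eq_zero.mp hz with h | h
      · exact h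
      · omega
    have hN₀ : N₀ = 0 := by omega
    have hN₁ : N₁ = 0 := by
      have : a*N₁ = 0 := by omega
      rcases Nat.mul_eq_zero.mp this with h | h
      · omega
      · exact h
    obtain ⟨q1, q2, q3⟩ := canon_eq ha hb (by omega) (by omega) hD
    rw [q1, q2, q3, sub_self]
    exact Ideal.zero_mem _
  | succ k ih =>
    intro N₀ N₁ N₂ hμ hD
    by_cases hsb : b ≤ N₀ + a*N₁
    · by_cases hbN : b ≤ N₀
      · -- move v₂ : (N₀-b, N₁, N₂+1)
        obtain ⟨n, rfl⟩ : ∃ n, N₀ = n + b := ⟨N₀ - b, by omega⟩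
        have hstep := step2 F a b c (r₀ + c*n) (r₁+1 + c*N₁) (r₂ + c*N₂) 1
        have e1 : mon F (r₀+1+c*(n+b)) (r₁+1+c*N₁) (r₂+1+c*N₂)
            = mon F (r₀+c*n+1+b*c*1) (r₁+1+c*N₁) (r₂+c*N₂+1) :=
          mon_congr F (by ring) rfl (by ring)
        have e2 : mon F (r₀+1+c*n) (r₁+1+c*N₁) (r₂+1+c*(N₂+1))
            = mon F (r₀+c*n+1) (r₁+1+c*N₁) (r₂+c*N₂+1+c*1) :=
          mon_congr F (by ring) rfl (by ring)
        rw [e1] at *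
        have hIH : mon F (r₀+1+c*n) (r₁+1+c*N₁) (r₂+1+c*(N₂+1))
            - mon F (r₀+1+c*(D%b%a)) (r₁+1+c*(D%b/a)) (r₂+1+c*(D/b)) ∈ Ideal.span (gens F a b c) := by
          apply ih
          · have m1 : ((n+b)+a*N₁)*(D+1) = (n+a*N₁)*(D+1) + b*(D+1) := by ring
            have hle : N₁ ≤ a*N₁ := Nat.le_mul_of_pos_left _ ha
            have m3 : D + 1 ≤ b*(D+1) := Nat.le_mul_of_pos_left _ hb
            have m2 : (if b ≤ n + a*N₁ then N₁ else n) ≤ D := by split <;> omega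
            omega
          · have : b*(N₂+1) = b*N₂ + b := by ring
            omega
        rw [e2] at hIH
        have hsplit : mon F (r₀+c*n+1+b*c*1) (r₁+1+c*N₁) (r₂+c*N₂+1)
              - mon F (r₀+1+c*(D%b%a)) (r₁+1+c*(D%b/a)) (r₂+1+c*(D/b))
            = (mon F (r₀+c*n+1+b*c*1) (r₁+1+c*N₁) (r₂+c*N₂+1)
                - mon F (r₀+c*n+1) (r₁+1+c*N₁) (r₂+c*N₂+1+c*1))
              + (mon F (r₀+c*n+1) (r₁+1+c*N₁) (r₂+c*N₂+1+c*1)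
                - mon F (r₀+1+c*(D%b%a)) (r₁+1+c*(D%b/a)) (r₂+1+c*(D/b))) := by ring
        rw [hsplit]
        exact Ideal.add_mem _ hstep hIH
      · -- move v₃⁻¹ : (N₀+a, N₁-1, N₂)
        have hN₁ : 1 ≤ N₁ := by
          rcases Nat.eq_zero_or_pos N₁ with h | h
          · subst h; simp at hsb; omega
          · exact h
        obtain ⟨n, rfl⟩ : ∃ n, N₁ = n + 1 := ⟨N₁ - 1, by omega⟩
        have hstep := step3 F a b c (r₀ + c*N₀) (r₁ + c*n) (r₂+1 + c*N₂) 1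
        have e1 : mon F (r₀+1+c*(N₀+a)) (r₁+1+c*n) (r₂+1+c*N₂)
            = mon F (r₀+c*N₀+1+a*c*1) (r₁+c*n+1) (r₂+1+c*N₂) := mon_congr F (by ring) (by ring) rfl
        have e2 : mon F (r₀+1+c*N₀) (r₁+1+c*(n+1)) (r₂+1+c*N₂)
            = mon F (r₀+c*N₀+1) (r₁+c*n+1+c*1) (r₂+1+c*N₂) := mon_congr F (by ring) (by ring) rfl
        rw [← e1, ← e2] at hstep
        have hIH : mon F (r₀+1+c*(N₀+a)) (r₁+1+c*n) (r₂+1+c*N₂)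
            - mon F (r₀+1+c*(D%b%a)) (r₁+1+c*(D%b/a)) (r₂+1+c*(D/b)) ∈ Ideal.span (gens F a b c) := by
          apply ih
          · have hs' : (N₀+a) + a*n = N₀ + a*(n+1) := by ring
            rw [hs', if_pos hsb]
            rw [if_pos hsb] at hμ
            omega
          · have : a*(n+1) = a*n + a := by ring
            omega
        have hsplit : mon F (r₀+1+c*N₀) (r₁+1+c*(n+1)) (r₂+1+c*N₂)
              - mon F (r₀+1+c*(D%b%a)) (r₁+1+c*(D%b/a)) (r₂+1+c*(D/b))
            = (mon F (r₀+1+c*(N₀+a)) (r₁+1+c*n) (r₂+1+c*N₂)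
                - mon F (r₀+1+c*(D%b%a)) (r₁+1+c*(D%b/a)) (r₂+1+c*(D/b)))
              - (mon F (r₀+1+c*(N₀+a)) (r₁+1+c*n) (r₂+1+c*N₂)
                - mon F (r₀+1+c*N₀) (r₁+1+c*(n+1)) (r₂+1+c*N₂)) := by ring
        rw [hsplit]
        exact Ideal.sub_mem _ hIH hstep
    · by_cases haN : a ≤ N₀
      · -- move v₃ : (N₀-a, N₁+1, N₂)
        obtain ⟨n, rfl⟩ : ∃ n, N₀ = n + a := ⟨N₀ - a, by omega⟩
        have hstep := step3 F a b c (r₀ + c*n) (r₁ + c*N₁) (r₂+1 + c*N₂) 1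
        have e1 : mon F (r₀+1+c*(n+a)) (r₁+1+c*N₁) (r₂+1+c*N₂)
            = mon F (r₀+c*n+1+a*c*1) (r₁+c*N₁+1) (r₂+1+c*N₂) := mon_congr F (by ring) (by ring) rfl
        have e2 : mon F (r₀+1+c*n) (r₁+1+c*(N₁+1)) (r₂+1+c*N₂)
            = mon F (r₀+c*n+1) (r₁+c*N₁+1+c*1) (r₂+1+c*N₂) := mon_congr F (by ring) (by ring) rfl
        rw [← e1, ← e2] at hstep
        have hIH : mon F (r₀+1+c*n) (r₁+1+c*(N₁+1)) (r₂+1+c*N₂)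
            - mon F (r₀+1+c*(D%b%a)) (r₁+1+c*(D%b/a)) (r₂+1+c*(D/b)) ∈ Ideal.span (gens F a b c) := by
          apply ih
          · have hs' : n + a*(N₁+1) = (n+a) + a*N₁ := by ring
            rw [hs', if_neg hsb]
            rw [if_neg hsb] at hμ
            omega
          · have : a*(N₁+1) = a*N₁ + a := by ring
            omega
        have hsplit : mon F (r₀+1+c*(n+a)) (r₁+1+c*N₁) (r₂+1+c*N₂)
              - mon F (r₀+1+c*(D%b%a)) (r₁+1+c*(D%b/a)) (r₂+1+c*(D/b))
            = (mon F (r₀+1+c*(n+a)) (r₁+1+c*N₁) (r₂+1+c*N₂)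
                - mon F (r₀+1+c*n) (r₁+1+c*(N₁+1)) (r₂+1+c*N₂))
              + (mon F (r₀+1+c*n) (r₁+1+c*(N₁+1)) (r₂+1+c*N₂)
                - mon F (r₀+1+c*(D%b%a)) (r₁+1+c*(D%b/a)) (r₂+1+c*(D/b))) := by ring
        rw [hsplit]
        exact Ideal.add_mem _ hstep hIH
      · -- terminal
        obtain ⟨q1, q2, q3⟩ := canon_eq ha hb (by omega) (by omega) hD
        rw [q1, q2, q3, sub_self]
        exact Ideal.zero_mem _

lemma d12 (a b c : ℕ) {m1 m2 m1' m2' : ℕ} (t : ℕ) (h1 : m1 = m1' + b*c*t) (h2 : m2' = m2 + a*c*t)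
    (hm1' : m1' ≠ 0) (hm2 : m2 ≠ 0) :
    mon F 0 m1 m2 - mon F 0 m1' m2' ∈ Ideal.span (gens F a b c) := by
  obtain ⟨β, rfl⟩ : ∃ β, m1' = β + 1 := ⟨m1' - 1, by omega⟩
  obtain ⟨γ, rfl⟩ : ∃ γ, m2 = γ + 1 := ⟨m2 - 1, by omega⟩
  rw [show m1 = β+1+b*c*t by omega, show m2' = γ+1+a*c*t by omega]
  exact step1 F a b c 0 β γ t

lemma d02 (a b c : ℕ) {m0 m2 m0' m2' : ℕ} (t : ℕ) (h1 : m0 = m0' + b*c*t) (h2 : m2' = m2 + c*t)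
    (hm0' : m0' ≠ 0) (hm2 : m2 ≠ 0) :
    mon F m0 0 m2 - mon F m0' 0 m2' ∈ Ideal.span (gens F a b c) := by
  obtain ⟨α, rfl⟩ : ∃ α, m0' = α + 1 := ⟨m0' - 1, by omega⟩
  obtain ⟨γ, rfl⟩ : ∃ γ, m2 = γ + 1 := ⟨m2 - 1, by omega⟩
  rw [show m0 = α+1+b*c*t by omega, show m2' = γ+1+c*t by omega]
  exact step2 F a b c α 0 γ t

lemma d01 (a b c : ℕ) {m0 m1 m0' m1' : ℕ} (t : ℕ) (h1 : m0 = m0' + a*c*t) (h2 : m1' = m1 + c*t)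
    (hm0' : m0' ≠ 0) (hm1 : m1 ≠ 0) :
    mon F m0 m1 0 - mon F m0' m1' 0 ∈ Ideal.span (gens F a b c) := by
  obtain ⟨α, rfl⟩ : ∃ α, m0' = α + 1 := ⟨m0' - 1, by omega⟩
  obtain ⟨β, rfl⟩ : ∃ β, m1 = β + 1 := ⟨m1 - 1, by omega⟩
  rw [show m0 = α+1+a*c*t by omega, show m1' = β+1+c*t by omega]
  exact step3 F a b c α β 0 t


lemma key (a b c : ℕ) (ha : 0 < a) (hb : 0 < b) (hc : 0 < c) (hab : Nat.gcd a b = 1)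
    (m m' : Fin 3 → ℕ) (hzero : ∀ i, m i = 0 ↔ m' i = 0)
    (hmod : ∀ i, m i ≡ m' i [MOD c])
    (hdeg : m 0 + a * m 1 + b * m 2 = m' 0 + a * m' 1 + b * m' 2) :
    mon F (m 0) (m 1) (m 2) - mon F (m' 0) (m' 1) (m' 2) ∈ Ideal.span (gens F a b c) := by
  have hdegZ : (m 0 : ℤ) + a * m 1 + b * m 2 = m' 0 + a * m' 1 + b * m' 2 := by exact_mod_cast hdeg
  have hb0 : (b : ℤ) ≠ 0 := by exact_mod_cast hb.ne'
  have hc0 : (c : ℤ) ≠ 0 := by exact_mod_cast hc.ne'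
  by_cases hm0 : m 0 = 0
  · have hm0' : m' 0 = 0 := (hzero 0).mp hm0
    by_cases hm1 : m 1 = 0
    · have hm1' : m' 1 = 0 := (hzero 1).mp hm1
      simp only [hm0, hm0', hm1, hm1', Nat.mul_zero, Nat.add_zero, Nat.zero_add] at hdeg
      have h2 : m 2 = m' 2 := Nat.eq_of_mul_eq_mul_left hb hdeg
      rw [hm0, hm0', hm1, hm1', h2, sub_self]; exact Ideal.zero_mem _
    · by_cases hm2 : m 2 = 0
      · have hm2' : m' 2 = 0 := (hzero 2).mp hm2
        simp only [hm0, hm0', hm2, hm2', Nat.mul_zero, Nat.add_zero, Nat.zero_add] at hdeg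
        have h1 : m 1 = m' 1 := Nat.eq_of_mul_eq_mul_left ha hdeg
        rw [hm0, hm0', hm2, hm2', h1, sub_self]; exact Ideal.zero_mem _
      · -- support {1,2}
        have hm1' : m' 1 ≠ 0 := fun h => hm1 ((hzero 1).mpr h)
        have hm2' : m' 2 ≠ 0 := fun h => hm2 ((hzero 2).mpr h)
        have hm0Z : (m 0 : ℤ) = 0 := by exact_mod_cast hm0
        have hm0Z' : (m' 0 : ℤ) = 0 := by exact_mod_cast hm0'
        have hz : (a:ℤ) * ((m 1:ℤ) - m' 1) = b * ((m' 2:ℤ) - m 2) := by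
          linear_combination hdegZ - hm0Z + hm0Z'
        have hcop : IsCoprime (b:ℤ) (a:ℤ) := by
          rw [Int.isCoprime_iff_gcd_eq_one, Int.gcd_natCast_natCast, Nat.gcd_comm]
          exact hab
        obtain ⟨s, hs⟩ : (b:ℤ) ∣ ((m 1:ℤ) - m' 1) := hcop.dvd_of_dvd_mul_left ⟨_, hz⟩
        have hs2 : (m' 2:ℤ) - m 2 = a * s := by
          apply mul_left_cancel₀ hb0
          rw [← hz, hs]; ring
        have d1 : (c:ℤ) ∣ b * s := by
          rw [← hs]
          exact dvd_sub_comm.mp (hmod 1).dvd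
        have d2 : (c:ℤ) ∣ a * s := by rw [← hs2]; exact (hmod 2).dvd
        have hbez : (1:ℤ) = a * Nat.gcdA a b + b * Nat.gcdB a b := by
          have := Nat.gcd_eq_gcd_ab a b
          rw [hab] at this; exact_mod_cast this
        have hcs : (c:ℤ) ∣ s := by
          have hrep : s = (a*s) * Nat.gcdA a b + (b*s) * Nat.gcdB a b := by
            linear_combination s * hbez
          rw [hrep]
          exact dvd_add (d2.mul_right _) (d1.mul_right _)
        obtain ⟨t, rfl⟩ := hcs
        rcases le_or_gt 0 t with hpos | hneg
        · have hT : ((t.toNat : ℕ):ℤ) = t := Int.toNat_of_nonneg hpos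
          have e1 : m 1 = m' 1 + b*c*(t.toNat) := by
            have : ((m 1 : ℕ):ℤ) = ((m' 1 + b*c*(t.toNat) : ℕ):ℤ) := by
              push_cast [hT]; linear_combination hs
            exact_mod_cast this
          have e2 : m' 2 = m 2 + a*c*(t.toNat) := by
            have : ((m' 2 : ℕ):ℤ) = ((m 2 + a*c*(t.toNat) : ℕ):ℤ) := by
              push_cast [hT]; linear_combination hs2
            exact_mod_cast this
          rw [hm0, hm0']
          exact d12 F a b c t.toNat e1 e2 hm1' hm2
        · have hT : (((-t).toNat : ℕ):ℤ) = -t := Int.toNat_of_nonneg (by omega)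
          have e1 : m' 1 = m 1 + b*c*((-t).toNat) := by
            have : ((m' 1 : ℕ):ℤ) = ((m 1 + b*c*((-t).toNat) : ℕ):ℤ) := by
              push_cast [hT]; linear_combination -hs
            exact_mod_cast this
          have e2 : m 2 = m' 2 + a*c*((-t).toNat) := by
            have : ((m 2 : ℕ):ℤ) = ((m' 2 + a*c*((-t).toNat) : ℕ):ℤ) := by
              push_cast [hT]; linear_combination -hs2
            exact_mod_cast this
          rw [hm0, hm0']
          have h := d12 F a b c (-t).toNat e1 e2 hm1 hm2'
          have h2 := neg_mem h
          rwa [neg_sub] at h2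
  · have hm0' : m' 0 ≠ 0 := fun h => hm0 ((hzero 0).mpr h)
    by_cases hm1 : m 1 = 0
    · have hm1' : m' 1 = 0 := (hzero 1).mp hm1
      by_cases hm2 : m 2 = 0
      · have hm2' : m' 2 = 0 := (hzero 2).mp hm2
        simp only [hm1, hm1', hm2, hm2', Nat.mul_zero, Nat.add_zero] at hdeg
        rw [hm1, hm1', hm2, hm2', hdeg, sub_self]; exact Ideal.zero_mem _
      · -- support {0,2}
        have hm2' : m' 2 ≠ 0 := fun h => hm2 ((hzero 2).mpr h)
        have hm1Z : (m 1 : ℤ) = 0 := by exact_mod_cast hm1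
        have hm1Z' : (m' 1 : ℤ) = 0 := by exact_mod_cast hm1'
        obtain ⟨t, ht⟩ : (c:ℤ) ∣ ((m' 2:ℤ) - m 2) := (hmod 2).dvd
        have hz : (m 0:ℤ) - m' 0 = b * (c * t) := by
          rw [← ht]; linear_combination hdegZ - a * hm1Z + a * hm1Z'
        rcases le_or_gt 0 t with hpos | hneg
        · have hT : ((t.toNat : ℕ):ℤ) = t := Int.toNat_of_nonneg hpos
          have e1 : m 0 = m' 0 + b*c*(t.toNat) := by
            have : ((m 0 : ℕ):ℤ) = ((m' 0 + b*c*(t.toNat) : ℕ):ℤ) := by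
              push_cast [hT]; linear_combination hz
            exact_mod_cast this
          have e2 : m' 2 = m 2 + c*(t.toNat) := by
            have : ((m' 2 : ℕ):ℤ) = ((m 2 + c*(t.toNat) : ℕ):ℤ) := by
              push_cast [hT]; linear_combination ht
            exact_mod_cast this
          rw [hm1, hm1']
          exact d02 F a b c t.toNat e1 e2 hm0' hm2
        · have hT : (((-t).toNat : ℕ):ℤ) = -t := Int.toNat_of_nonneg (by omega)
          have e1 : m' 0 = m 0 + b*c*((-t).toNat) := by
            have : ((m' 0 : ℕ):ℤ) = ((m 0 + b*c*((-t).toNat) : ℕ):ℤ) := by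
              push_cast [hT]; linear_combination -hz
            exact_mod_cast this
          have e2 : m 2 = m' 2 + c*((-t).toNat) := by
            have : ((m 2 : ℕ):ℤ) = ((m' 2 + c*((-t).toNat) : ℕ):ℤ) := by
              push_cast [hT]; linear_combination -ht
            exact_mod_cast this
          rw [hm1, hm1']
          have h := d02 F a b c (-t).toNat e1 e2 hm0 hm2'
          have h2 := neg_mem h
          rwa [neg_sub] at h2
    · by_cases hm2 : m 2 = 0
      · -- support {0,1}
        have hm2' : m' 2 = 0 := (hzero 2).mp hm2
        have hm1' : m' 1 ≠ 0 := fun h => hm1 ((hzero 1).mpr h)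
        have hm2Z : (m 2 : ℤ) = 0 := by exact_mod_cast hm2
        have hm2Z' : (m' 2 : ℤ) = 0 := by exact_mod_cast hm2'
        obtain ⟨t, ht⟩ : (c:ℤ) ∣ ((m' 1:ℤ) - m 1) := (hmod 1).dvd
        have hz : (m 0:ℤ) - m' 0 = a * (c * t) := by
          rw [← ht]; linear_combination hdegZ - b * hm2Z + b * hm2Z'
        rcases le_or_gt 0 t with hpos | hneg
        · have hT : ((t.toNat : ℕ):ℤ) = t := Int.toNat_of_nonneg hpos
          have e1 : m 0 = m' 0 + a*c*(t.toNat) := by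
            have : ((m 0 : ℕ):ℤ) = ((m' 0 + a*c*(t.toNat) : ℕ):ℤ) := by
              push_cast [hT]; linear_combination hz
            exact_mod_cast this
          have e2 : m' 1 = m 1 + c*(t.toNat) := by
            have : ((m' 1 : ℕ):ℤ) = ((m 1 + c*(t.toNat) : ℕ):ℤ) := by
              push_cast [hT]; linear_combination ht
            exact_mod_cast this
          rw [hm2, hm2']
          exact d01 F a b c t.toNat e1 e2 hm0' hm1
        · have hT : (((-t).toNat : ℕ):ℤ) = -t := Int.toNat_of_nonneg (by omega)
          have e1 : m' 0 = m 0 + a*c*((-t).toNat) := by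
            have : ((m' 0 : ℕ):ℤ) = ((m 0 + a*c*((-t).toNat) : ℕ):ℤ) := by
              push_cast [hT]; linear_combination -hz
            exact_mod_cast this
          have e2 : m 1 = m' 1 + c*((-t).toNat) := by
            have : ((m 1 : ℕ):ℤ) = ((m' 1 + c*((-t).toNat) : ℕ):ℤ) := by
              push_cast [hT]; linear_combination -ht
            exact_mod_cast this
          rw [hm2, hm2']
          have h := d01 F a b c (-t).toNat e1 e2 hm0 hm1'
          have h2 := neg_mem h
          rwa [neg_sub] at h2
      · -- full support
        have hm1' : m' 1 ≠ 0 := fun h => hm1 ((hzero 1).mpr h)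
        have hm2' : m' 2 ≠ 0 := fun h => hm2 ((hzero 2).mpr h)
        have hpos : ∀ i, 0 < m i ∧ 0 < m' i := by
          intro i
          fin_cases i
          exacts [⟨Nat.pos_of_ne_zero hm0, Nat.pos_of_ne_zero hm0'⟩,
            ⟨Nat.pos_of_ne_zero hm1, Nat.pos_of_ne_zero hm1'⟩,
            ⟨Nat.pos_of_ne_zero hm2, Nat.pos_of_ne_zero hm2'⟩]
        have hd : ∀ i, m i = (m i - 1) % c + 1 + c * ((m i - 1) / c) := by
          intro i
          have h := Nat.div_add_mod (m i - 1) c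
          have := (hpos i).1
          omega
        have hρeq : ∀ i, (m' i - 1) % c = (m i - 1) % c := by
          intro i
          have h2 : (m i - 1) + 1 ≡ (m' i - 1) + 1 [MOD c] := by
            have h3 := (hpos i).1
            have h4 := (hpos i).2
            rw [show m i - 1 + 1 = m i by omega, show m' i - 1 + 1 = m' i by omega]
            exact hmod i
          exact (Nat.ModEq.add_right_cancel' 1 h2).symm
        have hd' : ∀ i, m' i = (m i - 1) % c + 1 + c * ((m' i - 1) / c) := by
          intro i
          have h := Nat.div_add_mod (m' i - 1) c
          have := (hpos i).2
          rw [← hρeq i]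
          omega
        -- equal N-degrees
        have e0 : (m 0:ℤ) = (((m 0 - 1) % c : ℕ):ℤ) + 1 + (c:ℤ) * (((m 0 - 1) / c : ℕ):ℤ) := by
          exact_mod_cast hd 0
        have e1 : (m 1:ℤ) = (((m 1 - 1) % c : ℕ):ℤ) + 1 + (c:ℤ) * (((m 1 - 1) / c : ℕ):ℤ) := by
          exact_mod_cast hd 1
        have e2 : (m 2:ℤ) = (((m 2 - 1) % c : ℕ):ℤ) + 1 + (c:ℤ) * (((m 2 - 1) / c : ℕ):ℤ) := by
          exact_mod_cast hd 2
        have e0' : (m' 0:ℤ) = (((m 0 - 1) % c : ℕ):ℤ) + 1 + (c:ℤ) * (((m' 0 - 1) / c : ℕ):ℤ) := by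
          exact_mod_cast hd' 0
        have e1' : (m' 1:ℤ) = (((m 1 - 1) % c : ℕ):ℤ) + 1 + (c:ℤ) * (((m' 1 - 1) / c : ℕ):ℤ) := by
          exact_mod_cast hd' 1
        have e2' : (m' 2:ℤ) = (((m 2 - 1) % c : ℕ):ℤ) + 1 + (c:ℤ) * (((m' 2 - 1) / c : ℕ):ℤ) := by
          exact_mod_cast hd' 2
        have hDZ : ((((m 0 - 1) / c : ℕ) : ℤ) + a * ((m 1 - 1) / c : ℕ) + b * ((m 2 - 1) / c : ℕ))
            = (((m' 0 - 1) / c : ℕ) : ℤ) + a * ((m' 1 - 1) / c : ℕ) + b * ((m' 2 - 1) / c : ℕ) := by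
          apply mul_left_cancel₀ hc0
          linear_combination hdegZ - e0 - (a:ℤ) * e1 - (b:ℤ) * e2 + e0' + (a:ℤ) * e1' + (b:ℤ) * e2'
        have hDD : (m 0 - 1) / c + a * ((m 1 - 1) / c) + b * ((m 2 - 1) / c)
            = (m' 0 - 1) / c + a * ((m' 1 - 1) / c) + b * ((m' 2 - 1) / c) := by exact_mod_cast hDZ
        set M0 := (m 0 - 1) / c with hM0
        set M1 := (m 1 - 1) / c with hM1
        set M2 := (m 2 - 1) / c with hM2
        set M0' := (m' 0 - 1) / c with hM0'
        set M1' := (m' 1 - 1) / c with hM1'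
        set M2' := (m' 2 - 1) / c with hM2'
        set ρ0 := (m 0 - 1) % c + 1 with hρ0
        set ρ1 := (m 1 - 1) % c + 1 with hρ1
        set ρ2 := (m 2 - 1) % c + 1 with hρ2
        set D := M0 + a * M1 + b * M2 with hDdef
        have h1 := reach F a b c ha hb ρ0 ρ1 ρ2 (Nat.succ_pos _) (Nat.succ_pos _) (Nat.succ_pos _) D
          ((M0 + a*M1)*(D+1) + (if b ≤ M0 + a*M1 then M1 else M0)) M0 M1 M2 (le_refl _) rfl
        have h2 := reach F a b c ha hb ρ0 ρ1 ρ2 (Nat.succ_pos _) (Nat.succ_pos _) (Nat.succ_pos _) D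
          ((M0' + a*M1')*(D+1) + (if b ≤ M0' + a*M1' then M1' else M0')) M0' M1' M2' (le_refl _) hDD.symm
        have h3 := Ideal.sub_mem _ h1 h2
        rw [sub_sub_sub_cancel_right] at h3
        rw [hd 0, hd 1, hd 2, hd' 0, hd' 1, hd' 2]
        exact h3


lemma mon_hom (a b i j k : ℕ) :
    IsWeightedHomogeneous ![1,a,b] (mon F i j k) (i + j*a + k*b) := by
  have h : mon F i j k
      = monomial (Finsupp.single 0 i + Finsupp.single 1 j + Finsupp.single 2 k) (1 : F) := by
    unfold mon
    simp [X_pow_eq_monomial, monomial_mul]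
  rw [h]
  exact isWeightedHomogeneous_monomial (R := F) ![1,a,b]
    (Finsupp.single 0 i + Finsupp.single 1 j + Finsupp.single 2 k) 1
    (by simp [Finsupp.weight_apply, Finsupp.sum_fintype, Fin.sum_univ_three])

lemma mon_hom' (a b i j k d : ℕ) (hd : i + j*a + k*b = d) :
    IsWeightedHomogeneous ![1,a,b] (mon F i j k) d := hd ▸ mon_hom F a b i j k

lemma gens_hom (a b c : ℕ) (g : MvPolynomial (Fin 3) F) (hg : g ∈ gens F a b c) :
    ∃ d, IsWeightedHomogeneous ![1,a,b] g d := by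
  have hsub : ∀ (p q : MvPolynomial (Fin 3) F) (d : ℕ), IsWeightedHomogeneous ![1,a,b] p d →
      IsWeightedHomogeneous ![1,a,b] q d → IsWeightedHomogeneous ![1,a,b] (p - q) d := by
    intro p q d hp hq
    exact (mem_weightedHomogeneousSubmodule F ![1,a,b] d _).mp
      (Submodule.sub_mem _ ((mem_weightedHomogeneousSubmodule F ![1,a,b] d p).mpr hp)
        ((mem_weightedHomogeneousSubmodule F ![1,a,b] d q).mpr hq))
  rcases hg with rfl | rfl | rfl
  · refine ⟨(c*b+1)*a + b, hsub _ _ _ ?_ ?_⟩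
    · have h := mon_hom' F a b 0 (c*b+1) 1 ((c*b+1)*a + b) (by ring)
      have e : mon F 0 (c*b+1) 1 = X 1 ^ (c*b+1) * X 2 := by unfold mon; ring
      rwa [e] at h
    · have h := mon_hom' F a b 0 1 (c*a+1) ((c*b+1)*a + b) (by ring)
      have e : mon F 0 1 (c*a+1) = X 1 * X 2 ^ (c*a+1) := by unfold mon; ring
      rwa [e] at h
  · refine ⟨(c*b+1) + b, hsub _ _ _ ?_ ?_⟩
    · have h := mon_hom' F a b (c*b+1) 0 1 ((c*b+1) + b) (by ring)
      have e : mon F (c*b+1) 0 1 = X 0 ^ (c*b+1) * X 2 := by unfold mon; ring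
      rwa [e] at h
    · have h := mon_hom' F a b 1 0 (c+1) ((c*b+1) + b) (by ring)
      have e : mon F 1 0 (c+1) = X 0 * X 2 ^ (c+1) := by unfold mon; ring
      rwa [e] at h
  · refine ⟨(c*a+1) + a, hsub _ _ _ ?_ ?_⟩
    · have h := mon_hom' F a b (c*a+1) 1 0 ((c*a+1) + a) (by ring)
      have e : mon F (c*a+1) 1 0 = X 0 ^ (c*a+1) * X 1 := by unfold mon; ring
      rwa [e] at h
    · have h := mon_hom' F a b 1 (c+1) 0 ((c*a+1) + a) (by ring)
      have e : mon F 1 (c+1) 0 = X 0 * X 1 ^ (c+1) := by unfold mon; ring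
      rwa [e] at h

lemma pow_cyc [Fintype F] (c : ℕ) (hcard : c + 1 = Fintype.card F) (u : F) (k : ℕ) :
    u ^ (c*k+1) = u := by
  rcases eq_or_ne u 0 with rfl | hu
  · rw [zero_pow]; omega
  · have hc1 : u ^ c = 1 := by
      have h := FiniteField.pow_card_sub_one_eq_one u hu
      rw [← hcard] at h
      simpa using h
    rw [pow_add, pow_mul, hc1, one_pow, pow_one, one_mul]

lemma gens_vanish [Fintype F] (a b c : ℕ) (hcard : c + 1 = Fintype.card F)
    (g : MvPolynomial (Fin 3) F) (hg : g ∈ gens F a b c) (y : Fin 3 → F) : eval y g = 0 := by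
  have h2 : ∀ u : F, u ^ (c+1) = u := by
    intro u
    have := pow_cyc F c hcard u 1
    rwa [mul_one] at this
  rcases hg with rfl | rfl | rfl <;>
    simp only [map_sub, map_mul, map_pow, eval_X, pow_cyc F c hcard, h2, sub_self]

end WPV

open WPV in
/-- Theorem (vanishing ideal of `ℙ(1,a,b)(F_q)`): the ideal generated by all
weighted-homogeneous polynomials (weights `1, a, b`) vanishing at every nonzero point of
`F_q³` is generated by the three polynomials `f₁, f₂, f₃`. -/
theorem vanishing_ideal_P1ab (F : Type) [Field F] [Fintype F] (q : ℕ)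
    (hq : q = Fintype.card F) (a b : ℕ) (ha : 0 < a) (hb : 0 < b)
    (hab : Nat.gcd a b = 1) :
    Ideal.span {f : MvPolynomial (Fin 3) F |
        (∃ d : ℕ, IsWeightedHomogeneous ![1, a, b] f d) ∧
        ∀ y : Fin 3 → F, y ≠ 0 → eval y f = 0} =
    Ideal.span {X 1 ^ ((q - 1) * b + 1) * X 2 - X 1 * X 2 ^ ((q - 1) * a + 1),
        X 0 ^ ((q - 1) * b + 1) * X 2 - X 0 * X 2 ^ q,
        X 0 ^ ((q - 1) * a + 1) * X 1 - X 0 * X 1 ^ q} := by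
  classical
  have hq2 : 2 ≤ q := by rw [hq]; exact Fintype.one_lt_card
  obtain ⟨c, rfl⟩ : ∃ c, q = c + 1 := ⟨q - 1, by omega⟩
  have hc : 0 < c := by omega
  have hcard : c + 1 = Fintype.card F := hq
  have hgens : ({X 1 ^ ((c + 1 - 1) * b + 1) * X 2 - X 1 * X 2 ^ ((c + 1 - 1) * a + 1),
      X 0 ^ ((c + 1 - 1) * b + 1) * X 2 - X 0 * X 2 ^ (c + 1),
      X 0 ^ ((c + 1 - 1) * a + 1) * X 1 - X 0 * X 1 ^ (c + 1)}
        : Set (MvPolynomial (Fin 3) F)) = gens F a b c := by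
    simp only [Nat.add_sub_cancel]
    rfl
  rw [hgens]
  apply le_antisymm
  · -- hard inclusion
    apply Ideal.span_le.mpr
    rintro f ⟨⟨d, hhom⟩, hvan⟩
    simp only [SetLike.mem_coe]
    -- weighted degree of support elements
    have hw : ∀ e : Fin 3 →₀ ℕ, coeff e f ≠ 0 → e 0 + a * e 1 + b * e 2 = d := by
      intro e he
      have h2 := hhom he
      rw [show (Finsupp.weight ![1,a,b]) e = e 0 + a * e 1 + b * e 2 from by
        simp [Finsupp.weight_apply, Finsupp.sum_fintype, Fin.sum_univ_three]
        ring] at h2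
      exact h2
    -- reduction of exponents
    set redE : ℕ → ℕ := fun n => if n = 0 then 0 else (n-1) % c + 1 with hredE
    have hredE0 : redE 0 = 0 := by simp [hredE]
    have hredE_le : ∀ n, redE n ≤ c := by
      intro n
      simp only [hredE]
      split
      · omega
      · have := Nat.mod_lt (n-1) hc
        omega
    have hredE_zero_iff : ∀ n, redE n = 0 ↔ n = 0 := by
      intro n
      simp only [hredE]
      split <;> omega
    have hredE_mod : ∀ n, redE n ≡ n [MOD c] := by
      intro n
      rcases eq_or_ne n 0 with rfl | hn
      · rw [hredE0]
      · have h1 : redE n = (n-1) % c + 1 := by rw [hredE]; simp [hn]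
        have h2 : redE n ≤ n := by
          have := Nat.div_add_mod (n-1) c
          have := Nat.mod_le (n-1) c
          omega
        have h3 : c ∣ n - redE n := by
          have := Nat.div_add_mod (n-1) c
          have : n - redE n = c * ((n-1)/c) := by omega
          exact ⟨_, this⟩
        exact ((Nat.modEq_iff_dvd' h2).mpr h3)
    have hredE_pow : ∀ (u : F) (n : ℕ), u ^ redE n = u ^ n := by
      intro u n
      rcases eq_or_ne n 0 with rfl | hn
      · rw [hredE0]
      · rcases eq_or_ne u 0 with rfl | hu
        · rw [zero_pow hn, zero_pow]
          rw [Ne, hredE_zero_iff]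
          exact hn
        · have hc1 : u ^ c = 1 := by
            have h := FiniteField.pow_card_sub_one_eq_one u hu
            rw [← hcard] at h
            simpa using h
          have h1 : redE n = (n-1) % c + 1 := by rw [hredE]; simp [hn]
          have hn2 : n = redE n + c * ((n-1)/c) := by
            have := Nat.div_add_mod (n-1) c
            omega
          conv_rhs => rw [hn2]
          rw [pow_add, pow_mul, hc1, one_pow, mul_one]
    set red : (Fin 3 →₀ ℕ) → (Fin 3 →₀ ℕ) := fun e => Finsupp.mapRange redE hredE0 e with hredDef
    have hred_apply : ∀ e i, red e i = redE (e i) := by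
      intro e i
      rw [hredDef]
      exact Finsupp.mapRange_apply
    -- f vanishes at every point, including 0
    have hc0f : coeff 0 f = 0 := by
      by_contra h0
      have hd0 : d = 0 := by have h := hw 0 h0; simp at h; omega
      set y₀ : Fin 3 → F := fun i => if i = 0 then 1 else 0 with hy₀def
      have hy₀ : y₀ ≠ 0 := by
        intro h
        have := congrFun h 0
        simp [hy₀def] at this
      have hsupp : f.support = {0} := by
        apply Finset.Subset.antisymm
        · intro e he
          rw [mem_support_iff] at he
          have h1 := hw e he
          rw [hd0] at h1
          have h2 : a * e 1 = 0 := by omega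
          have h3 : b * e 2 = 0 := by omega
          have he1 : e 1 = 0 := by
            rcases Nat.mul_eq_zero.mp h2 with h | h
            · omega
            · exact h
          have he2 : e 2 = 0 := by
            rcases Nat.mul_eq_zero.mp h3 with h | h
            · omega
            · exact h
          have he0 : e 0 = 0 := by omega
          simp only [Finset.mem_singleton]
          ext i
          fin_cases i
          exacts [he0, he1, he2]
        · intro e he
          simp only [Finset.mem_singleton] at he
          subst he
          exact mem_support_iff.mpr h0
      have hf : f = monomial 0 (coeff 0 f) := by
        conv_lhs => rw [← f.support_sum_monomial_coeff]
        rw [hsupp, Finset.sum_singleton]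
      have hev := hvan y₀ hy₀
      rw [hf] at hev
      simp [eval_monomial] at hev
      exact h0 hev
    have hvan' : ∀ y : Fin 3 → F, eval y f = 0 := by
      intro y
      rcases eq_or_ne y 0 with rfl | hy
      · simp [eval_zero, constantCoeff_eq, hc0f]
      · exact hvan y hy
    -- the reduced polynomial
    set f' : MvPolynomial (Fin 3) F := ∑ e ∈ f.support, monomial (red e) (coeff e f) with hf'def
    have heval' : ∀ y : Fin 3 → F, eval y f' = eval y f := by
      intro y
      rw [hf'def, map_sum, eval_eq' y f]
      apply Finset.sum_congr rfl
      intro e _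
      rw [eval_monomial]
      congr 1
      rw [Finsupp.prod_pow]
      apply Finset.prod_congr rfl
      intro i _
      rw [hred_apply]
      exact hredE_pow (y i) (e i)
    have hf'0 : f' = 0 := by
      apply MvPolynomial.eq_zero_of_eval_eq_zero (σ := Fin 3) (K := F)
      · intro v
        rw [heval']
        exact hvan' v
      · rw [mem_restrictDegree]
        intro s hs i
        rw [mem_support_iff] at hs
        have hex : ∃ e ∈ f.support, red e = s := by
          by_contra hne
          push_neg at hne
          apply hs
          rw [hf'def, coeff_sum]
          apply Finset.sum_eq_zero
          intro e he
          rw [coeff_monomial, if_neg (hne e he)]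
        obtain ⟨e, _, rfl⟩ := hex
        rw [hred_apply]
        calc redE (e i) ≤ c := hredE_le _
        _ = Fintype.card F - 1 := by omega
    -- class sums vanish
    have hclass : ∀ r, ∑ e ∈ f.support.filter (fun e => red e = r), coeff e f = 0 := by
      intro r
      have h1 : coeff r f' = 0 := by rw [hf'0, coeff_zero]
      rw [hf'def, coeff_sum] at h1
      simp only [coeff_monomial] at h1
      rw [Finset.sum_filter]
      exact h1
    -- decompose f along fibers of red
    have hfsum : f = ∑ r ∈ f.support.image red,
        ∑ e ∈ f.support.filter (fun e => red e = r), monomial e (coeff e f) := by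
      rw [Finset.sum_fiberwise_of_maps_to (fun e he => Finset.mem_image_of_mem red he),
        support_sum_monomial_coeff]
    rw [hfsum]
    apply Ideal.sum_mem
    intro r hr
    obtain ⟨e₀, he₀s, he₀r⟩ := Finset.mem_image.mp hr
    have he₀f : e₀ ∈ f.support.filter (fun e => red e = r) :=
      Finset.mem_filter.mpr ⟨he₀s, he₀r⟩
    have hsplit : ∑ e ∈ f.support.filter (fun e => red e = r), monomial e (coeff e f)
        = (∑ e ∈ f.support.filter (fun e => red e = r),
            (monomial e (coeff e f) - monomial e₀ (coeff e f)))
          + monomial e₀ (∑ e ∈ f.support.filter (fun e => red e = r), coeff e f) := by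
      rw [map_sum (monomial e₀), ← Finset.sum_add_distrib]
      apply Finset.sum_congr rfl
      intro e _
      rw [sub_add_cancel]
    rw [hsplit, hclass r, map_zero, add_zero]
    apply Ideal.sum_mem
    intro e hef
    obtain ⟨hes, her⟩ := Finset.mem_filter.mp hef
    -- pairwise binomial in the ideal
    have hmon : ∀ (s : Fin 3 →₀ ℕ) (t : F), (monomial s t : MvPolynomial (Fin 3) F)
        = C t * mon F (s 0) (s 1) (s 2) := by
      intro s t
      unfold mon
      rw [monomial_eq, Finsupp.prod_pow, Fin.prod_univ_three]
    have hredeq : ∀ i, redE (e i) = redE (e₀ i) := by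
      intro i
      have := congrArg (fun g => g i) (her.trans he₀r.symm)
      simpa only [hred_apply] using this
    have hkey := key F a b c ha hb hc hab (⇑e) (⇑e₀)
      (fun i => by
        rw [← hredE_zero_iff (e i), ← hredE_zero_iff (e₀ i), hredeq i])
      (fun i => ((hredE_mod (e i)).symm.trans (hredeq i ▸ hredE_mod (e₀ i))))
      (by
        rw [hw e (mem_support_iff.mp hes), hw e₀ (mem_support_iff.mp he₀s)])
    rw [hmon e (coeff e f), hmon e₀ (coeff e f), ← mul_sub]
    exact Ideal.mul_mem_left _ _ hkey
  · -- easy inclusion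
    apply Ideal.span_le.mpr
    intro g hg
    apply Ideal.subset_span
    exact ⟨gens_hom F a b c g hg, fun y _ => gens_vanish F a b c hcard g hg y⟩
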